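/- arXiv:2406.03635 — 2 statements merged into one kernel-verified Lean document; each statement's English description precedes it below -/
import Mathlib

section
/- Let D be a tournament missing disjoint paths of length 2 and let C = a_1b_1c_1, …, a_kb_kc_k be a double cycle in Δ(D). Then there exists s ∈ {1,…,k} such that, in the induced subdigraph D[K(C)], |N⁺(a_s)| ≤ |N⁺⁺(a_s)| or |N⁺(c_s)| ≤ |N⁺⁺(c_s)|. -/
namespace SSNC

variable {V : Type*}

/-- The arc relation of an oriented graph: no digons (hence irreflexive). -/
def Oriented (A : V → V → Prop) : Prop := ∀ u v, A u v → ¬ A v u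

/-- `u ∈ N⁺⁺(v)`: the second out-neighborhood. -/
def SecondOut (A : V → V → Prop) (v u : V) : Prop :=
  u ≠ v ∧ ¬ A v u ∧ ∃ w, A v w ∧ A w u

/-- `{u, v}` is a missing edge of the digraph. -/
def IsMissing (A : V → V → Prop) (u v : V) : Prop :=
  u ≠ v ∧ ¬ A u v ∧ ¬ A v u

/-- The losing relation for a fixed labeling of the two pairs: `a→x`, `b→y`,
`y ∉ N⁺(a) ∪ N⁺⁺(a)` and `x ∉ N⁺(b) ∪ N⁺⁺(b)`. -/
def LosesOrd (A : V → V → Prop) (a b x y : V) : Prop :=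
  A a x ∧ A b y ∧ ¬ A a y ∧ ¬ SecondOut A a y ∧ ¬ A b x ∧ ¬ SecondOut A b x

/-- The missing edge `{a,b}` loses to the missing edge `{x,y}` (for some labeling). -/
def Loses (A : V → V → Prop) (a b x y : V) : Prop :=
  LosesOrd A a b x y ∨ LosesOrd A a b y x

/-- Degree of a vertex in the missing graph. -/
noncomputable def mdeg (A : V → V → Prop) (v : V) : ℕ :=
  ({w | IsMissing A v w} : Set V).ncard

/-- The missing graph, as a simple graph. -/
def missingGraph (A : V → V → Prop) : SimpleGraph V where
  Adj u v := IsMissing A u v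
  symm := by
    constructor
    rintro u v ⟨h1, h2, h3⟩
    exact ⟨h1.symm, h3, h2⟩
  loopless := by
    constructor
    rintro v ⟨h1, -, -⟩
    exact h1 rfl

/-- The missing graph is a vertex-disjoint union of paths
(equivalently: acyclic with maximum degree at most 2). -/
def MissingDisjointPaths (A : V → V → Prop) : Prop :=
  (missingGraph A).IsAcyclic ∧ ∀ v, mdeg A v ≤ 2

/-- The missing graph is a vertex-disjoint union of paths on exactly 3 vertices
(equivalently: every missing edge has one endpoint of missing-degree 1 and one of
missing-degree 2). -/
def MissingPaths2 (A : V → V → Prop) : Prop :=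
  ∀ u v, IsMissing A u v →
    (mdeg A u = 1 ∧ mdeg A v = 2) ∨ (mdeg A u = 2 ∧ mdeg A v = 1)

/-- The missing graph is a vertex-disjoint union of paths on 2 or 3 vertices. -/
def MissingPathsLe2 (A : V → V → Prop) : Prop :=
  ∀ u v, IsMissing A u v →
    (mdeg A u = 1 ∧ mdeg A v = 1) ∨ (mdeg A u = 1 ∧ mdeg A v = 2) ∨
    (mdeg A u = 2 ∧ mdeg A v = 1)

/-- Out-degree of the missing edge `{u,v}` in the dependency digraph `Δ(D)`:
the number of missing edges it loses to. -/
noncomputable def outDegDelta (A : V → V → Prop) (u v : V) : ℕ :=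
  ({f : Sym2 V | ∃ x y, f = s(x, y) ∧ IsMissing A x y ∧ Loses A u v x y}).ncard

/-- In-degree of the missing edge `{u,v}` in the dependency digraph `Δ(D)`:
the number of missing edges losing to it. -/
noncomputable def inDegDelta (A : V → V → Prop) (u v : V) : ℕ :=
  ({f : Sym2 V | ∃ x y, f = s(x, y) ∧ IsMissing A x y ∧ Loses A x y u v}).ncard

/-- `C = a₁b₁c₁, …, a_k b_k c_k` is a double cycle in `Δ(D)`: pairwise vertex-disjoint
missing paths of length 2 (`k ≥ 2`), where each of `{aᵢ,bᵢ}, {bᵢ,cᵢ}` loses to each of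
`{aᵢ₊₁,bᵢ₊₁}, {bᵢ₊₁,cᵢ₊₁}` (indices modulo `k`). -/
def IsDoubleCycle (A : V → V → Prop) (k : ℕ) (a b c : ZMod k → V) : Prop :=
  2 ≤ k ∧
  (∀ i, IsMissing A (a i) (b i) ∧ IsMissing A (b i) (c i) ∧ a i ≠ c i) ∧
  (∀ i j, i ≠ j → Disjoint ({a i, b i, c i} : Set V) {a j, b j, c j}) ∧
  (∀ i, Loses A (a i) (b i) (a (i + 1)) (b (i + 1)) ∧
        Loses A (a i) (b i) (b (i + 1)) (c (i + 1)) ∧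
        Loses A (b i) (c i) (a (i + 1)) (b (i + 1)) ∧
        Loses A (b i) (c i) (b (i + 1)) (c (i + 1)))

/-- `K(C)` for a double cycle `C`. -/
def Kset {k : ℕ} (a b c : ZMod k → V) : Set V :=
  {v | ∃ i, v = a i ∨ v = b i ∨ v = c i}

/-- Out-neighborhood in the subdigraph induced on `K`. -/
def outIn (A : V → V → Prop) (K : Set V) (v : V) : Set V := {u | u ∈ K ∧ A v u}

/-- In-neighborhood in the subdigraph induced on `K`. -/
def inIn (A : V → V → Prop) (K : Set V) (v : V) : Set V := {u | u ∈ K ∧ A u v}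

/-- Second out-neighborhood in the subdigraph induced on `K`. -/
def secondOutIn (A : V → V → Prop) (K : Set V) (v : V) : Set V :=
  {u | u ∈ K ∧ u ≠ v ∧ ¬ A v u ∧ ∃ w ∈ K, A v w ∧ A w u}

/-- Second in-neighborhood in the subdigraph induced on `K`. -/
def secondInIn (A : V → V → Prop) (K : Set V) (v : V) : Set V :=
  {u | u ∈ K ∧ u ≠ v ∧ ¬ A u v ∧ ∃ w ∈ K, A u w ∧ A w v}

/-!
Write `i ⇒ j` (`midArc`) for `bᵢ → bⱼ`. Vertices on different missing paths are adjacent, so `⇒`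
is a tournament on the paths. The losing conditions between consecutive paths `i, i+1` say that arcs
between two ends or two middles follow `⇒`, arcs between an end and a middle go against it, and
every 2-path from path `i` to path `i+1` is short-cut by an arc. Walking backwards around the cycle,
this shows that no vertex of `K(C)` beats both the middle and an end of the same path, and that
alone forces the same arc pattern between any two distinct paths: `D[K(C)]` is the tournament `⇒`
with every vertex blown up into two ends and a middle.

Let `s` have minimum out-degree `d` in `⇒`, so that `2d + 1 ≤ k`, and let `x` be the end of path
`s` beaten by the other end. Then `x` beats both ends of the `d` out-neighbours of `s` and the
middles of its `k - 1 - d` in-neighbours. Its second out-neighbourhood contains `bₛ`, both ends of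
all in-neighbours of `s` but at most one, and the middles of all out-neighbours but at most one; the
two exceptions cannot both occur. An exceptional in-neighbour beats `s` and all out-neighbours of
`s`, so its out-degree exceeds `d`, which improves the bound to `2d + 2 ≤ k`.
-/

theorem Oriented.irrefl {A : V → V → Prop} (hA : Oriented A) (u : V) : ¬ A u u :=
  fun h => hA u u h h

section Tournament

variable {ι : Type*}

structure IsTournament (R : ι → ι → Prop) : Prop where
  oriented : Oriented R
  total : ∀ i j, i ≠ j → R i j ∨ R j i

/-- Blow up each vertex of the tournament `R` into two ends and a middle, with arcs between two
ends or two middles following `R` and arcs between an end and a middle against it. Then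
`endReach R s` is the set of `j` whose ends are reached from an end of `s` by a 2-path, and
`midReach R s` the set of `j` whose middle is. -/
def endReach (R : ι → ι → Prop) (s : ι) : Set ι :=
  {j | ∃ m, (R s m ∧ R m j) ∨ (R m s ∧ R j m)}

def midReach (R : ι → ι → Prop) (s : ι) : Set ι :=
  {j | ∃ m, (R s m ∧ R j m) ∨ (R m s ∧ R m j)}

namespace IsTournament

variable {R : ι → ι → Prop} (hR : IsTournament R)
include hR

theorem ncard_out_add_ncard_in [Finite ι] (s : ι) :
    {j | R s j}.ncard + {j | R j s}.ncard + 1 = Nat.card ι := by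
  have hdisj : Disjoint {j | R s j} {j | R j s} :=
    Set.disjoint_left.2 fun j h h' => hR.oriented _ _ h h'
  have hunion : {j | R s j} ∪ {j | R j s} = {s}ᶜ := by
    ext j
    simp only [Set.mem_union, Set.mem_ofPred_eq, Set.mem_compl_iff, Set.mem_singleton_iff]
    refine ⟨?_, fun hj => hR.total s j (Ne.symm hj)⟩
    rintro (h | h) rfl <;> exact hR.oriented.irrefl _ h
  rw [← Set.ncard_union_eq hdisj, hunion, ← Set.ncard_singleton s, add_comm,
    Set.ncard_add_ncard_compl]

theorem two_mul_sum_ncard_out [Fintype ι] :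
    2 * ∑ i, {j | R i j}.ncard + Fintype.card ι = Fintype.card ι * Fintype.card ι := by
  classical
  have hswap : ∑ i, {j | R i j}.ncard = ∑ i, {j | R j i}.ncard := by
    simp only [Set.ncard_eq_toFinset_card', Set.toFinset_ofPred]
    exact Finset.sum_card_bipartiteAbove_eq_sum_card_bipartiteBelow R
  have hsum := Finset.sum_congr rfl fun s (_ : s ∈ Finset.univ) => hR.ncard_out_add_ncard_in s
  rw [Finset.sum_add_distrib, Finset.sum_add_distrib, ← hswap] at hsum
  simp only [Finset.sum_const, Finset.card_univ, smul_eq_mul, mul_one,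
    Nat.card_eq_fintype_card] at hsum
  omega

variable {s : ι}

theorem out_diff_midReach_eq_empty {j : ι} (hj : R j s) (hjE : j ∉ endReach R s) :
    {j | R s j} \ midReach R s = ∅ := by
  refine Set.eq_empty_of_forall_notMem fun j' ⟨hj', hj'F⟩ => ?_
  rcases hR.total j j' fun h => hR.oriented _ _ hj (h ▸ hj') with h | h
  · exact hj'F ⟨j, Or.inr ⟨hj, h⟩⟩
  · exact hjE ⟨j', Or.inl ⟨hj', h⟩⟩

variable [Finite ι]

theorem ncard_in_diff_endReach_le_one : ({j | R j s} \ endReach R s).ncard ≤ 1 := by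
  refine (Set.ncard_le_one (Set.toFinite _)).2 fun j ⟨hj, hjE⟩ j' ⟨hj', hj'E⟩ => ?_
  by_contra hne
  rcases hR.total j j' hne with h | h
  · exact hjE ⟨j', Or.inr ⟨hj', h⟩⟩
  · exact hj'E ⟨j, Or.inr ⟨hj, h⟩⟩

theorem ncard_out_diff_midReach_le_one : ({j | R s j} \ midReach R s).ncard ≤ 1 := by
  refine (Set.ncard_le_one (Set.toFinite _)).2 fun j ⟨hj, hjF⟩ j' ⟨hj', hj'F⟩ => ?_
  by_contra hne
  rcases hR.total j j' hne with h | h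
  · exact hjF ⟨j', Or.inl ⟨hj', h⟩⟩
  · exact hj'F ⟨j, Or.inl ⟨hj, h⟩⟩

theorem ncard_out_lt_of_notMem_endReach {j : ι} (hj : R j s) (hjE : j ∉ endReach R s) :
    {m | R s m}.ncard < {m | R j m}.ncard := by
  have hbeats : insert s {m | R s m} ⊆ {m | R j m} := by
    rintro m (rfl | hm)
    · exact hj
    · refine (hR.total m j fun h => hR.oriented _ _ hj (h ▸ hm)).resolve_left ?_
      exact fun h => hjE ⟨m, Or.inl ⟨hm, h⟩⟩
  have := Set.ncard_le_ncard hbeats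
  rwa [Set.ncard_insert_of_notMem (s := {m | R s m}) (hR.oriented.irrefl s)] at this

variable (hmin : ∀ j, {m | R s m}.ncard ≤ {m | R j m}.ncard)
include hmin

theorem ncard_out_le_ncard_in : {j | R s j}.ncard ≤ {j | R j s}.ncard := by
  have := Fintype.ofFinite ι
  have hle := Finset.card_nsmul_le_sum Finset.univ (fun i => {j | R i j}.ncard) _
    fun j _ => hmin j
  have hsum := hR.two_mul_sum_ncard_out
  have hcard := hR.ncard_out_add_ncard_in s
  rw [Finset.card_univ, smul_eq_mul] at hle
  rw [Nat.card_eq_fintype_card] at hcard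
  nlinarith

theorem ncard_out_lt_ncard_in {j : ι} (hj : {m | R s m}.ncard < {m | R j m}.ncard) :
    {j | R s j}.ncard < {j | R j s}.ncard := by
  have := Fintype.ofFinite ι
  have hlt := Finset.sum_lt_sum (f := fun _ => {m | R s m}.ncard)
    (g := fun i => {m | R i m}.ncard) (fun i _ => hmin i) ⟨j, Finset.mem_univ j, hj⟩
  have hsum := hR.two_mul_sum_ncard_out
  have hcard := hR.ncard_out_add_ncard_in s
  rw [Finset.sum_const, Finset.card_univ, smul_eq_mul] at hlt
  rw [Nat.card_eq_fintype_card] at hcard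
  nlinarith

theorem two_mul_ncard_out_add_ncard_in_le :
    2 * {j | R s j}.ncard + {j | R j s}.ncard ≤
      1 + 2 * ({j | R j s} ∩ endReach R s).ncard + ({j | R s j} ∩ midReach R s).ncard := by
  have hME := Set.ncard_inter_add_ncard_sdiff_eq_ncard {j | R j s} (endReach R s)
  have hPF := Set.ncard_inter_add_ncard_sdiff_eq_ncard {j | R s j} (midReach R s)
  have hPM := hR.ncard_out_le_ncard_in hmin
  have hMdiff := hR.ncard_in_diff_endReach_le_one (s := s)
  have hPdiff := hR.ncard_out_diff_midReach_le_one (s := s)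
  rcases ({j | R j s} \ endReach R s).eq_empty_or_nonempty with hempty | ⟨j, hj, hjE⟩
  · rw [hempty, Set.ncard_empty] at hME
    omega
  · have := hR.ncard_out_lt_ncard_in hmin (hR.ncard_out_lt_of_notMem_endReach hj hjE)
    rw [hR.out_diff_midReach_eq_empty hj hjE, Set.ncard_empty] at hPF
    omega

end IsTournament

end Tournament

theorem ZMod.forall_of_pred_closed {k : ℕ} [NeZero k] {Q : ZMod k → Prop}
    (h : ∀ t, Q (t + 1) → Q t) {j : ZMod k} (hj : Q j) (i : ZMod k) : Q i := by
  have key : ∀ n : ℕ, Q (j - n) := by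
    intro n
    induction n with
    | zero => simpa using hj
    | succ n ih => exact h _ (by rwa [Nat.cast_succ, sub_add_eq_sub_sub, sub_add_cancel])
  simpa using key (j - i).val

section MissingPaths

variable {A : V → V → Prop}

theorem IsMissing.symm {u v : V} (h : IsMissing A u v) : IsMissing A v u :=
  ⟨h.1.symm, h.2.2, h.2.1⟩

namespace MissingPaths2

variable (hP : MissingPaths2 A) {x u y z : V} (hxu : IsMissing A x u) (huy : IsMissing A u y)
  (hxy : x ≠ y)
include hP hxu huy hxy

theorem mdeg_eq_two : mdeg A u = 2 := by
  have hfin : {w | IsMissing A u w}.Finite := by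
    refine Set.finite_of_ncard_ne_zero ?_
    rcases hP u y huy with h | h <;> rw [← mdeg, h.1] <;> norm_num
  have : 1 < mdeg A u := (Set.one_lt_ncard_iff hfin).2 ⟨x, y, hxu.symm, huy, hxy⟩
  rcases hP u y huy with h | h <;> omega

theorem eq_of_isMissing_end (hxz : IsMissing A x z) : z = u := by
  have hx : mdeg A x = 1 := by
    rcases hP x u hxu with h | h
    · exact h.1
    · have := hP.mdeg_eq_two hxu huy hxy
      omega
  obtain ⟨w, hw⟩ := Set.ncard_eq_one.1 hx
  have hz : z ∈ ({w} : Set V) := hw ▸ hxz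
  have hu : u ∈ ({w} : Set V) := hw ▸ hxu
  exact hz.trans hu.symm

theorem eq_or_eq_of_isMissing_mid (huz : IsMissing A u z) : z = x ∨ z = y := by
  by_contra! hz
  have h2 := hP.mdeg_eq_two hxu huy hxy
  have hfin : {w | IsMissing A u w}.Finite :=
    Set.finite_of_ncard_ne_zero (by rw [← mdeg, h2]; norm_num)
  have := (Set.two_lt_ncard_iff hfin).2 ⟨x, y, z, hxu.symm, huy, huz, hxy, hz.1.symm, hz.2.symm⟩
  rw [← mdeg, h2] at this
  omega

end MissingPaths2

end MissingPaths

section DoubleCycle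

variable {A : V → V → Prop} {k : ℕ} {a b c : ZMod k → V}

def pathSet (a b c : ZMod k → V) (i : ZMod k) : Set V := {a i, b i, c i}

def midArc (A : V → V → Prop) (b : ZMod k → V) (i j : ZMod k) : Prop := A (b i) (b j)

theorem mem_pathSet_iff {i : ZMod k} {u : V} :
    u ∈ pathSet a b c i ↔ u = b i ∨ u = a i ∨ u = c i := by
  simp only [pathSet, Set.mem_insert_iff, Set.mem_singleton_iff]
  tauto

theorem mid_mem_pathSet (i : ZMod k) : b i ∈ pathSet a b c i := by
  simp [mem_pathSet_iff]

theorem end_mem_pathSet {i : ZMod k} {e : V} (he : e = a i ∨ e = c i) : e ∈ pathSet a b c i := by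
  rcases he with rfl | rfl <;> simp [mem_pathSet_iff]

theorem mem_kset_of_mem_pathSet {i : ZMod k} {u : V} (hu : u ∈ pathSet a b c i) :
    u ∈ Kset a b c :=
  ⟨i, hu⟩

theorem finite_kset [NeZero k] : (Kset a b c).Finite :=
  (Set.finite_iUnion fun i => ((Set.finite_singleton (c i)).insert (b i)).insert (a i)).subset
    fun _ ⟨i, hu⟩ => Set.mem_iUnion.2 ⟨i, hu⟩

theorem exists_end_of_mem_pathSet {i : ZMod k} {u : V} (hu : u ∈ pathSet a b c i) :
    ∃ e, (e = a i ∨ e = c i) ∧ (u = e ∨ u = b i) := by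
  rcases mem_pathSet_iff.1 hu with rfl | rfl | rfl
  exacts [⟨a i, Or.inl rfl, Or.inr rfl⟩, ⟨a i, Or.inl rfl, Or.inl rfl⟩,
    ⟨c i, Or.inr rfl, Or.inl rfl⟩]

theorem Oriented.ne_of_midArc (hA : Oriented A) {i j : ZMod k} (h : midArc A b i j) : i ≠ j :=
  fun hij => hA.irrefl _ (hij ▸ h)

theorem Loses.swap_left {u v x y : V} (h : Loses A u v x y) : Loses A v u x y := by
  unfold Loses LosesOrd at *
  tauto

theorem Loses.swap_right {u v x y : V} (h : Loses A u v x y) : Loses A u v y x :=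
  h.symm

section Loses

variable {e m e' m' u v : V} (h : Loses A e m e' m') (he : e ≠ m) (he' : e' ≠ m')
  (hu : u = e ∨ u = m) (hv : v = e' ∨ v = m')
include h he he' hu hv

/-- Arcs between two endpoints of the same kind (`e, e'` or `m, m'`) go the way `m → m'` does,
and arcs between endpoints of different kinds go the other way. -/
theorem Loses.arc_iff : A u v ↔ ((u = m ↔ v = m') ↔ A m m') := by
  rcases h with h | h <;> rcases hu with rfl | rfl <;> rcases hv with rfl | rfl <;>
    simp only [LosesOrd] at h <;> simp_all

theorem Loses.not_secondOut (huv : ¬ A u v) : ¬ SecondOut A u v := by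
  rcases h with h | h <;> rcases hu with rfl | rfl <;> rcases hv with rfl | rfl <;>
    simp only [LosesOrd] at h <;> simp_all

end Loses

namespace IsDoubleCycle

variable (hC : IsDoubleCycle A k a b c)
include hC

theorem neZero : NeZero k := ⟨by have := hC.1; omega⟩

theorem succ_ne (i : ZMod k) : i + 1 ≠ i := by
  have : Fact (1 < k) := ⟨hC.1⟩
  simp

theorem end_ne_mid {i : ZMod k} {e : V} (he : e = a i ∨ e = c i) : e ≠ b i := by
  rcases he with rfl | rfl
  exacts [(hC.2.1 i).1.1, (hC.2.1 i).2.1.1.symm]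

theorem not_arc_end_mid {i : ZMod k} {e : V} (he : e = a i ∨ e = c i) : ¬ A e (b i) := by
  rcases he with rfl | rfl
  exacts [(hC.2.1 i).1.2.1, (hC.2.1 i).2.1.2.2]

theorem not_arc_of_mem_pathSet (hA : Oriented A) {s : ZMod k} {x y : V}
    (hxy : x = a s ∧ y = c s ∨ x = c s ∧ y = a s) (hyx : A y x) {v : V}
    (hv : v ∈ pathSet a b c s) : ¬ A x v := by
  rcases mem_pathSet_iff.1 hv with rfl | rfl | rfl
  · exact hC.not_arc_end_mid (hxy.imp And.left And.left)
  all_goals rcases hxy with ⟨rfl, rfl⟩ | ⟨rfl, rfl⟩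
  exacts [hA.irrefl _, hA _ _ hyx, hA _ _ hyx, hA.irrefl _]

theorem eq_of_mem_pathSet {i j : ZMod k} {u v : V} (hu : u ∈ pathSet a b c i)
    (hv : v ∈ pathSet a b c j) (huv : u = v) : i = j := by
  subst huv
  by_contra hij
  exact Set.disjoint_left.1 (hC.2.2.1 i j hij) hu hv

theorem ne_of_mem_pathSet {i j : ZMod k} (hij : i ≠ j) {u v : V} (hu : u ∈ pathSet a b c i)
    (hv : v ∈ pathSet a b c j) : u ≠ v :=
  fun huv => hij (hC.eq_of_mem_pathSet hu hv huv)

theorem not_isMissing_of_ne (hP : MissingPaths2 A) {i j : ZMod k} (hij : i ≠ j) {u v : V}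
    (hu : u ∈ pathSet a b c i) (hv : v ∈ pathSet a b c j) : ¬ IsMissing A u v := by
  intro huv
  obtain ⟨hab, hbc, hac⟩ := hC.2.1 i
  refine hij (hC.eq_of_mem_pathSet (v := v) ?_ hv rfl)
  rcases mem_pathSet_iff.1 hu with rfl | rfl | rfl
  · rcases hP.eq_or_eq_of_isMissing_mid hab hbc hac huv with rfl | rfl
    exacts [end_mem_pathSet (Or.inl rfl), end_mem_pathSet (Or.inr rfl)]
  · exact hP.eq_of_isMissing_end hab hbc hac huv ▸ mid_mem_pathSet i
  · exact hP.eq_of_isMissing_end hbc.symm hab.symm hac.symm huv ▸ mid_mem_pathSet i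

theorem adj_of_ne (hP : MissingPaths2 A) {i j : ZMod k} (hij : i ≠ j) {u v : V}
    (hu : u ∈ pathSet a b c i) (hv : v ∈ pathSet a b c j) : A u v ∨ A v u := by
  by_contra! h
  exact hC.not_isMissing_of_ne hP hij hu hv ⟨hC.ne_of_mem_pathSet hij hu hv, h.1, h.2⟩

theorem adj_ends (hP : MissingPaths2 A) (i : ZMod k) : A (a i) (c i) ∨ A (c i) (a i) := by
  obtain ⟨hab, hbc, hac⟩ := hC.2.1 i
  by_contra! h
  exact hbc.1 (hP.eq_of_isMissing_end hab hbc hac ⟨hac, h.1, h.2⟩).symm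

theorem loses {i : ZMod k} {e e' : V} (he : e = a i ∨ e = c i)
    (he' : e' = a (i + 1) ∨ e' = c (i + 1)) : Loses A e (b i) e' (b (i + 1)) := by
  obtain ⟨h1, h2, h3, h4⟩ := hC.2.2.2 i
  rcases he with rfl | rfl <;> rcases he' with rfl | rfl
  exacts [h1, h2.swap_right, h3.swap_left, h4.swap_left.swap_right]

theorem arc_iff_succ {i : ZMod k} {u v : V} (hu : u ∈ pathSet a b c i)
    (hv : v ∈ pathSet a b c (i + 1)) :
    A u v ↔ ((u = b i ↔ v = b (i + 1)) ↔ midArc A b i (i + 1)) := by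
  obtain ⟨e, he, hue⟩ := exists_end_of_mem_pathSet hu
  obtain ⟨e', he', hve⟩ := exists_end_of_mem_pathSet hv
  exact (hC.loses he he').arc_iff (hC.end_ne_mid he) (hC.end_ne_mid he') hue hve

theorem arc_of_arc_of_arc_succ {i : ZMod k} {u v w : V} (hu : u ∈ pathSet a b c i)
    (hw : w ∈ pathSet a b c (i + 1)) (huv : A u v) (hvw : A v w) : A u w := by
  obtain ⟨e, he, hue⟩ := exists_end_of_mem_pathSet hu
  obtain ⟨e', he', hwe⟩ := exists_end_of_mem_pathSet hw
  by_contra huw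
  refine (hC.loses he he').not_secondOut (hC.end_ne_mid he) (hC.end_ne_mid he') hue hwe huw
    ⟨hC.ne_of_mem_pathSet (hC.succ_ne i) hw hu, huw, v, huv, hvw⟩

theorem not_arc_succ_mid_and_end {i : ZMod k} {u e : V} (hu : u ∈ pathSet a b c i)
    (he : e = a (i + 1) ∨ e = c (i + 1)) (hmid : A u (b (i + 1))) (hend : A u e) : False := by
  have h1 := (hC.arc_iff_succ hu (mid_mem_pathSet _)).1 hmid
  have h2 := (hC.arc_iff_succ hu (end_mem_pathSet he)).1 hend
  have := hC.end_ne_mid he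
  tauto

theorem not_arc_mid_and_end (hP : MissingPaths2 A) {u : V} (hu : u ∈ Kset a b c) {j : ZMod k}
    {e : V} (he : e = a j ∨ e = c j) (hmid : A u (b j)) (hend : A u e) : False := by
  have := hC.neZero
  obtain ⟨p, hp⟩ := hu
  let Q t := A u (b t) ∧ ∃ e, (e = a t ∨ e = c t) ∧ A u e
  -- a vertex of path `t` beating `u` would, by the shortcuts, beat both kinds on path `t + 1`
  have step : ∀ t, Q (t + 1) → Q t := by
    rintro t ⟨hb, e, he, hue⟩
    by_cases hpt : p = t
    · subst hpt
      exact (hC.not_arc_succ_mid_and_end hp he hb hue).elim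
    have hbeat : ∀ v ∈ pathSet a b c t, A u v := fun v hv =>
      (hC.adj_of_ne hP hpt hp hv).resolve_right fun hvu =>
        hC.not_arc_succ_mid_and_end hv he
          (hC.arc_of_arc_of_arc_succ hv (mid_mem_pathSet _) hvu hb)
          (hC.arc_of_arc_of_arc_succ hv (end_mem_pathSet he) hvu hue)
    exact ⟨hbeat _ (mid_mem_pathSet t), a t, Or.inl rfl, hbeat _ (end_mem_pathSet (Or.inl rfl))⟩
  obtain ⟨hb, e, he, hue⟩ := ZMod.forall_of_pred_closed step ⟨hmid, e, he, hend⟩ (p + 1)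
  exact hC.not_arc_succ_mid_and_end hp he hb hue

theorem arcs_of_midArc (hP : MissingPaths2 A) {i j : ZMod k} (hij : i ≠ j)
    (hb : midArc A b i j) {e e' : V} (he : e = a i ∨ e = c i) (he' : e' = a j ∨ e' = c j) :
    A e' (b i) ∧ A e e' ∧ A (b j) e := by
  have h1 : A e' (b i) :=
    (hC.adj_of_ne hP hij (mid_mem_pathSet i) (end_mem_pathSet he')).resolve_left fun h =>
      hC.not_arc_mid_and_end hP (mem_kset_of_mem_pathSet (mid_mem_pathSet i)) he' hb h
  have h2 : A e e' :=
    (hC.adj_of_ne hP hij (end_mem_pathSet he) (end_mem_pathSet he')).resolve_right fun h =>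
      hC.not_arc_mid_and_end hP (mem_kset_of_mem_pathSet (end_mem_pathSet he')) he h1 h
  have h3 : A (b j) e :=
    (hC.adj_of_ne hP hij (end_mem_pathSet he) (mid_mem_pathSet j)).resolve_left fun h =>
      hC.not_arc_mid_and_end hP (mem_kset_of_mem_pathSet (end_mem_pathSet he)) he' h h2
  exact ⟨h1, h2, h3⟩

section Arcs

variable (hA : Oriented A) (hP : MissingPaths2 A) {i j : ZMod k} (hij : i ≠ j)
include hA hP hij

theorem arc_end_end_iff {e e' : V} (he : e = a i ∨ e = c i) (he' : e' = a j ∨ e' = c j) :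
    A e e' ↔ midArc A b i j := by
  refine ⟨fun h => ?_, fun hb => (hC.arcs_of_midArc hP hij hb he he').2.1⟩
  refine (hC.adj_of_ne hP hij (mid_mem_pathSet i) (mid_mem_pathSet j)).resolve_right fun hb => ?_
  exact hA _ _ h (hC.arcs_of_midArc hP hij.symm hb he' he).2.1

theorem arc_end_mid_iff {e : V} (he : e = a i ∨ e = c i) : A e (b j) ↔ midArc A b j i := by
  refine ⟨fun h => ?_, fun hb => (hC.arcs_of_midArc hP hij.symm hb (Or.inl rfl) he).1⟩
  refine (hC.adj_of_ne hP hij (mid_mem_pathSet i) (mid_mem_pathSet j)).resolve_left fun hb => ?_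
  exact hA _ _ h (hC.arcs_of_midArc hP hij hb he (Or.inl rfl)).2.2

theorem arc_mid_end_iff {e : V} (he : e = a j ∨ e = c j) : A (b i) e ↔ midArc A b j i := by
  refine ⟨fun h => ?_, fun hb => (hC.arcs_of_midArc hP hij.symm hb he (Or.inl rfl)).2.2⟩
  refine (hC.adj_of_ne hP hij (mid_mem_pathSet i) (mid_mem_pathSet j)).resolve_left fun hb => ?_
  exact hA _ _ h (hC.arcs_of_midArc hP hij hb (Or.inl rfl) he).1

end Arcs

theorem isTournament (hA : Oriented A) (hP : MissingPaths2 A) : IsTournament (midArc A b) :=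
  ⟨fun _ _ => hA _ _, fun _ _ hij => hC.adj_of_ne hP hij (mid_mem_pathSet _) (mid_mem_pathSet _)⟩

theorem ncard_ends_union_mids (S T : Set (ZMod k)) :
    (a '' S ∪ c '' S ∪ b '' T).ncard = 2 * S.ncard + T.ncard := by
  have := hC.neZero
  have hinj : ∀ f : ZMod k → V, (∀ i, f i ∈ pathSet a b c i) → f.Injective :=
    fun f hf i j hij => hC.eq_of_mem_pathSet (hf i) (hf j) hij
  have hac : Disjoint (a '' S) (c '' S) := by
    refine Set.disjoint_left.2 ?_
    rintro _ ⟨i, -, rfl⟩ ⟨j, -, hji⟩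
    obtain rfl :=
      hC.eq_of_mem_pathSet (end_mem_pathSet (Or.inr rfl)) (end_mem_pathSet (Or.inl rfl)) hji
    exact (hC.2.1 j).2.2 hji.symm
  have hacb : Disjoint (a '' S ∪ c '' S) (b '' T) := by
    refine Set.disjoint_left.2 ?_
    rintro _ (⟨i, -, rfl⟩ | ⟨i, -, rfl⟩) ⟨j, -, hji⟩
    · obtain rfl := hC.eq_of_mem_pathSet (mid_mem_pathSet j) (end_mem_pathSet (Or.inl rfl)) hji
      exact hC.end_ne_mid (Or.inl rfl) hji.symm
    · obtain rfl := hC.eq_of_mem_pathSet (mid_mem_pathSet j) (end_mem_pathSet (Or.inr rfl)) hji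
      exact hC.end_ne_mid (Or.inr rfl) hji.symm
  rw [Set.ncard_union_eq hacb, Set.ncard_union_eq hac,
    Set.ncard_image_of_injective _ (hinj a fun _ => end_mem_pathSet (Or.inl rfl)),
    Set.ncard_image_of_injective _ (hinj b mid_mem_pathSet),
    Set.ncard_image_of_injective _ (hinj c fun _ => end_mem_pathSet (Or.inr rfl))]
  ring

section SecondNeighbourhood

variable (hA : Oriented A) (hP : MissingPaths2 A) {s : ZMod k} {x : V} (hx : x = a s ∨ x = c s)
include hA hP hx

theorem outIn_subset (hsink : ∀ v ∈ pathSet a b c s, ¬ A x v) :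
    outIn A (Kset a b c) x ⊆
      a '' {j | midArc A b s j} ∪ c '' {j | midArc A b s j} ∪ b '' {j | midArc A b j s} := by
  rintro u ⟨⟨j, hj : u ∈ pathSet a b c j⟩, hxu⟩
  have hsj : s ≠ j := by
    rintro rfl
    exact hsink u hj hxu
  rcases mem_pathSet_iff.1 hj with rfl | rfl | rfl
  · exact Or.inr ⟨j, (hC.arc_end_mid_iff hA hP hsj hx).1 hxu, rfl⟩
  · exact Or.inl (Or.inl ⟨j, (hC.arc_end_end_iff hA hP hsj hx (Or.inl rfl)).1 hxu, rfl⟩)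
  · exact Or.inl (Or.inr ⟨j, (hC.arc_end_end_iff hA hP hsj hx (Or.inr rfl)).1 hxu, rfl⟩)

theorem end_mem_secondOutIn {j : ZMod k} (hjs : midArc A b j s)
    (hj : j ∈ endReach (midArc A b) s) {e : V} (he : e = a j ∨ e = c j) :
    e ∈ secondOutIn A (Kset a b c) x := by
  refine ⟨mem_kset_of_mem_pathSet (end_mem_pathSet he),
    hC.ne_of_mem_pathSet (hA.ne_of_midArc hjs) (end_mem_pathSet he) (end_mem_pathSet hx),
    fun h => hA _ _ hjs ((hC.arc_end_end_iff hA hP (hA.ne_of_midArc hjs).symm hx he).1 h), ?_⟩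
  obtain ⟨m, ⟨hsm, hmj⟩ | ⟨hms, hjm⟩⟩ := hj
  · refine ⟨a m, mem_kset_of_mem_pathSet (end_mem_pathSet (Or.inl rfl)), ?_, ?_⟩
    · exact (hC.arc_end_end_iff hA hP (hA.ne_of_midArc hsm) hx (Or.inl rfl)).2 hsm
    · exact (hC.arc_end_end_iff hA hP (hA.ne_of_midArc hmj) (Or.inl rfl) he).2 hmj
  · refine ⟨b m, mem_kset_of_mem_pathSet (mid_mem_pathSet m), ?_, ?_⟩
    · exact (hC.arc_end_mid_iff hA hP (hA.ne_of_midArc hms).symm hx).2 hms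
    · exact (hC.arc_mid_end_iff hA hP (hA.ne_of_midArc hjm).symm he).2 hjm

theorem mid_mem_secondOutIn {j : ZMod k} (hsj : midArc A b s j)
    (hj : j ∈ midReach (midArc A b) s) : b j ∈ secondOutIn A (Kset a b c) x := by
  refine ⟨mem_kset_of_mem_pathSet (mid_mem_pathSet j),
    hC.ne_of_mem_pathSet (hA.ne_of_midArc hsj).symm (mid_mem_pathSet j) (end_mem_pathSet hx),
    fun h => hA _ _ hsj ((hC.arc_end_mid_iff hA hP (hA.ne_of_midArc hsj) hx).1 h), ?_⟩
  obtain ⟨m, ⟨hsm, hjm⟩ | ⟨hms, hmj⟩⟩ := hj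
  · refine ⟨a m, mem_kset_of_mem_pathSet (end_mem_pathSet (Or.inl rfl)), ?_, ?_⟩
    · exact (hC.arc_end_end_iff hA hP (hA.ne_of_midArc hsm) hx (Or.inl rfl)).2 hsm
    · exact (hC.arc_end_mid_iff hA hP (hA.ne_of_midArc hjm).symm (Or.inl rfl)).2 hjm
  · refine ⟨b m, mem_kset_of_mem_pathSet (mid_mem_pathSet m), ?_, hmj⟩
    exact (hC.arc_end_mid_iff hA hP (hA.ne_of_midArc hms).symm hx).2 hms

theorem mid_self_mem_secondOutIn : b s ∈ secondOutIn A (Kset a b c) x := by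
  refine ⟨mem_kset_of_mem_pathSet (mid_mem_pathSet s), (hC.end_ne_mid hx).symm,
    hC.not_arc_end_mid hx, ?_⟩
  rcases hC.adj_of_ne hP (hC.succ_ne s).symm (mid_mem_pathSet s) (mid_mem_pathSet (s + 1))
    with h | h
  · exact ⟨a (s + 1), mem_kset_of_mem_pathSet (end_mem_pathSet (Or.inl rfl)),
      (hC.arc_end_end_iff hA hP (hC.succ_ne s).symm hx (Or.inl rfl)).2 h,
      (hC.arc_end_mid_iff hA hP (hC.succ_ne s) (Or.inl rfl)).2 h⟩
  · exact ⟨b (s + 1), mem_kset_of_mem_pathSet (mid_mem_pathSet _),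
      (hC.arc_end_mid_iff hA hP (hC.succ_ne s).symm hx).2 h, h⟩

theorem subset_secondOutIn :
    insert (b s) (a '' ({j | midArc A b j s} ∩ endReach (midArc A b) s) ∪
      c '' ({j | midArc A b j s} ∩ endReach (midArc A b) s) ∪
      b '' ({j | midArc A b s j} ∩ midReach (midArc A b) s)) ⊆
        secondOutIn A (Kset a b c) x := by
  rintro u (rfl | ((⟨j, ⟨hjs, hj⟩, rfl⟩ | ⟨j, ⟨hjs, hj⟩, rfl⟩) | ⟨j, ⟨hsj, hj⟩, rfl⟩))
  exacts [hC.mid_self_mem_secondOutIn hA hP hx,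
    hC.end_mem_secondOutIn hA hP hx hjs hj (Or.inl rfl),
    hC.end_mem_secondOutIn hA hP hx hjs hj (Or.inr rfl), hC.mid_mem_secondOutIn hA hP hx hsj hj]

end SecondNeighbourhood

theorem ncard_outIn_le_ncard_secondOutIn (hA : Oriented A) (hP : MissingPaths2 A) {s : ZMod k}
    (hmin : ∀ j, {m | midArc A b s m}.ncard ≤ {m | midArc A b j m}.ncard) {x y : V}
    (hxy : x = a s ∧ y = c s ∨ x = c s ∧ y = a s) (hyx : A y x) :
    (outIn A (Kset a b c) x).ncard ≤ (secondOutIn A (Kset a b c) x).ncard := by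
  have := hC.neZero
  have hx : x = a s ∨ x = c s := hxy.imp And.left And.left
  set R := midArc A b
  set E := {j | R j s} ∩ endReach R s
  set F := {j | R s j} ∩ midReach R s
  have hbs : b s ∉ a '' E ∪ c '' E ∪ b '' F := by
    rintro ((⟨j, -, hj⟩ | ⟨j, -, hj⟩) | ⟨j, ⟨hsj, -⟩, hj⟩)
    · obtain rfl := hC.eq_of_mem_pathSet (end_mem_pathSet (Or.inl rfl)) (mid_mem_pathSet s) hj
      exact hC.end_ne_mid (Or.inl rfl) hj
    · obtain rfl := hC.eq_of_mem_pathSet (end_mem_pathSet (Or.inr rfl)) (mid_mem_pathSet s) hj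
      exact hC.end_ne_mid (Or.inr rfl) hj
    · obtain rfl := hC.eq_of_mem_pathSet (mid_mem_pathSet j) (mid_mem_pathSet s) hj
      exact hA.irrefl _ hsj
  calc (outIn A (Kset a b c) x).ncard
      ≤ (a '' {j | R s j} ∪ c '' {j | R s j} ∪ b '' {j | R j s}).ncard :=
        Set.ncard_le_ncard <| hC.outIn_subset hA hP hx fun _ => hC.not_arc_of_mem_pathSet hA hxy hyx
    _ = 2 * {j | R s j}.ncard + {j | R j s}.ncard := hC.ncard_ends_union_mids _ _
    _ ≤ 1 + 2 * E.ncard + F.ncard := (hC.isTournament hA hP).two_mul_ncard_out_add_ncard_in_le hmin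
    _ = (insert (b s) (a '' E ∪ c '' E ∪ b '' F)).ncard := by
        rw [Set.ncard_insert_of_notMem hbs, hC.ncard_ends_union_mids]
        ring
    _ ≤ (secondOutIn A (Kset a b c) x).ncard :=
        Set.ncard_le_ncard (hC.subset_secondOutIn hA hP hx) (finite_kset.subset fun _ hu => hu.1)

end IsDoubleCycle

end DoubleCycle

theorem stmt12_general {V : Type*} (A : V → V → Prop) (hA : Oriented A)
    (hP : MissingPaths2 A) (k : ℕ) (a b c : ZMod k → V)
    (hC : IsDoubleCycle A k a b c) (K : Set V) (hK : K = Kset a b c) :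
    ∃ s : ZMod k,
      (outIn A K (a s)).ncard ≤ (secondOutIn A K (a s)).ncard ∨
      (outIn A K (c s)).ncard ≤ (secondOutIn A K (c s)).ncard := by
  subst hK
  have := hC.neZero
  obtain ⟨s, hmin⟩ := Finite.exists_min fun j => {m | midArc A b j m}.ncard
  refine ⟨s, ?_⟩
  rcases hC.adj_ends hP s with h | h
  · exact Or.inr (hC.ncard_outIn_le_ncard_secondOutIn hA hP hmin (Or.inr ⟨rfl, rfl⟩) h)
  · exact Or.inl (hC.ncard_outIn_le_ncard_secondOutIn hA hP hmin (Or.inl ⟨rfl, rfl⟩) h)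

/-- Proposition 4.13: some `a_s` or `c_s` has the SNP in `D[K(C)]`. -/
theorem stmt12 {V : Type*} [Fintype V] (A : V → V → Prop) (hA : Oriented A)
    (hP : MissingPaths2 A) (k : ℕ) (a b c : ZMod k → V)
    (hC : IsDoubleCycle A k a b c) (K : Set V) (hK : K = Kset a b c) :
    ∃ s : ZMod k,
      (outIn A K (a s)).ncard ≤ (secondOutIn A K (a s)).ncard ∨
      (outIn A K (c s)).ncard ≤ (secondOutIn A K (c s)).ncard :=
  stmt12_general A hA hP k a b c hC K hK

end SSNC
end

section
/- Let D be a digraph and let {a_1,b_1}, …, {a_k,b_k} (k ≥ 2) be pairwise vertex-disjoint missing edges of D such that for every i ∈ {1,…,k−1}: a_i→a_{i+1}, b_i→b_{i+1}, b_{i+1} ∉ N⁺(a_i) ∪ N⁺⁺(a_i), and a_{i+1} ∉ N⁺(b_i) ∪ N⁺⁺(b_i); and such that {a_k,b_k} loses to {a_1,b_1}. Suppose further that within K(C) = {a_i, b_i : 1 ≤ i ≤ k} the only missing edges of D are the pairs {a_i,b_i} (so the induced subdigraph D[K(C)] is a tournament missing a matching). Then: (i) if k is odd, a_k→a_1 and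 b_k→b_1; (ii) if k is even, a_k→b_1 and b_k→a_1. -/
namespace SSNC

variable {V : Type*}

/-
If `a → x` and `b → y` witness that `{a,b}` loses to `{x,y}`, then any `p, q` with `a → p`,
`b → q` satisfy `x → q` and `y → p` once these pairs are adjacent: `q → x` would put `x` into
`N⁺⁺(b)`, and `p → y` would put `y` into `N⁺⁺(a)`. Along the chain `{a₁,b₁}, …, {a_k,b_k}` this
propagates backwards-pointing arcs from `aⱼ, bⱼ` to `aᵢ, bᵢ` whose letters swap at every step,
starting from `a_{i+1} → bᵢ` and `b_{i+1} → aᵢ`; taking `i = 1`, `j = k` gives the parity rule.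
-/

theorem not_arc_of_not_secondOut {A : V → V → Prop} {v w u : V} (h : ¬ SecondOut A v u)
    (hne : u ≠ v) (hvu : ¬ A v u) (hvw : A v w) : ¬ A w u :=
  fun hwu => h ⟨hne, hvu, w, hvw, hwu⟩

namespace LosesOrd

variable {A : V → V → Prop} {a b x y : V}

theorem arcs_back (h : LosesOrd A a b x y) (hay : A a y ∨ A y a) (hbx : A b x ∨ A x b) :
    A y a ∧ A x b :=
  ⟨hay.resolve_left h.2.2.1, hbx.resolve_left h.2.2.2.2.1⟩

theorem arcs_of_arcs (h : LosesOrd A a b x y) (hxb : x ≠ b) (hya : y ≠ a) {p q : V}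
    (hap : A a p) (hbq : A b q) (hxq : A x q ∨ A q x) (hyp : A y p ∨ A p y) :
    A x q ∧ A y p :=
  ⟨hxq.resolve_right (not_arc_of_not_secondOut h.2.2.2.2.2 hxb h.2.2.2.2.1 hbq),
    hyp.resolve_right (not_arc_of_not_secondOut h.2.2.2.1 hya h.2.2.1 hap)⟩

end LosesOrd

def CompleteBetweenPairs (A : V → V → Prop) (k : ℕ) (a b : ℕ → V) : Prop :=
  ∀ i < k, ∀ j < k, i ≠ j → ∀ u ∈ ({a i, b i} : Set V), ∀ v ∈ ({a j, b j} : Set V),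
    u ≠ v ∧ (A u v ∨ A v u)

section Chain

variable {A : V → V → Prop} {k : ℕ} {a b : ℕ → V}

theorem completeBetweenPairs_of_missing_subset_matching
    (hdisj : ∀ i < k, ∀ j < k, i ≠ j → Disjoint ({a i, b i} : Set V) ({a j, b j} : Set V))
    (htourn : ∀ u ∈ {w | ∃ i < k, w = a i ∨ w = b i}, ∀ v ∈ {w | ∃ i < k, w = a i ∨ w = b i},
      IsMissing A u v → ∃ i < k, ({u, v} : Set V) = ({a i, b i} : Set V)) :
    CompleteBetweenPairs A k a b := by
  have index_eq : ∀ {i j u}, i < k → j < k → u ∈ ({a i, b i} : Set V) →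
      u ∈ ({a j, b j} : Set V) → i = j := fun hi hj hu hu' => by
    by_contra hij
    exact (hdisj _ hi _ hj hij).ne_of_mem hu hu' rfl
  intro i hi j hj hij u hu v hv
  have hne : u ≠ v := (hdisj i hi j hj hij).ne_of_mem hu hv
  refine ⟨hne, ?_⟩
  by_contra! h
  obtain ⟨m, hm, hpair⟩ := htourn u ⟨i, hi, hu⟩ v ⟨j, hj, hv⟩ ⟨hne, h.1, h.2⟩
  have hum : u ∈ ({a m, b m} : Set V) := hpair ▸ Set.mem_insert u {v}
  have hvm : v ∈ ({a m, b m} : Set V) := hpair ▸ Set.mem_insert_of_mem u rfl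
  exact hij ((index_eq hi hm hu hum).trans (index_eq hj hm hv hvm).symm)

variable (hc : CompleteBetweenPairs A k a b)
  (hchain : ∀ i, i + 1 < k → LosesOrd A (a i) (b i) (a (i + 1)) (b (i + 1)))
include hc hchain

theorem arcs_succ_of_arcs {i j : ℕ} (hij : i < j) (hj : j + 1 < k) {p q : V}
    (hp : p ∈ ({a i, b i} : Set V)) (hq : q ∈ ({a i, b i} : Set V))
    (hap : A (a j) p) (hbq : A (b j) q) : A (a (j + 1)) q ∧ A (b (j + 1)) p := by
  have hc' := hc (j + 1) hj
  have hi : i < k := by omega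
  exact (hchain j hj).arcs_of_arcs
    (hc' j (by omega) (by omega) _ (by simp) _ (by simp)).1
    (hc' j (by omega) (by omega) _ (by simp) _ (by simp)).1 hap hbq
    (hc' i hi (by omega) _ (by simp) _ hq).2 (hc' i hi (by omega) _ (by simp) _ hp).2

theorem arcs_along_chain (i : ℕ) : ∀ d, i + d + 1 < k →
    (Even d → A (a (i + d + 1)) (b i) ∧ A (b (i + d + 1)) (a i)) ∧
    (Odd d → A (a (i + d + 1)) (a i) ∧ A (b (i + d + 1)) (b i))
  | 0, hk => by
    have hc' := hc (i + 1) hk i (by omega) (by omega)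
    refine ⟨fun _ => (hchain i hk).arcs_back ?_ ?_ |>.symm, fun h => absurd h (by decide)⟩
    · exact (hc' _ (Set.mem_insert_of_mem _ rfl) _ (Set.mem_insert _ _)).2.symm
    · exact (hc' _ (Set.mem_insert _ _) _ (Set.mem_insert_of_mem _ rfl)).2.symm
  | d + 1, hk => by
    have ih := arcs_along_chain i d (by omega)
    rcases Nat.even_or_odd d with hd | hd
    · have := arcs_succ_of_arcs hc hchain (i := i) (j := i + d + 1) (by omega) hk
        (by simp) (by simp) (ih.1 hd).1 (ih.1 hd).2
      exact ⟨fun h => absurd hd (Nat.even_add_one.mp h), fun _ => this⟩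
    · have := arcs_succ_of_arcs hc hchain (i := i) (j := i + d + 1) (by omega) hk
        (by simp) (by simp) (ih.2 hd).1 (ih.2 hd).2
      exact ⟨fun _ => this, fun h => (Nat.not_odd_iff_even.mpr hd.add_one h).elim⟩

end Chain

theorem stmt14_general {V : Type*} (A : V → V → Prop)
    (k : ℕ) (hk : 2 ≤ k) (a b : ℕ → V)
    (hdisj : ∀ i < k, ∀ j < k, i ≠ j →
      Disjoint ({a i, b i} : Set V) ({a j, b j} : Set V))
    (hchain : ∀ i, i + 1 < k → LosesOrd A (a i) (b i) (a (i + 1)) (b (i + 1)))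
    (K : Set V) (hK : K = {w | ∃ i < k, w = a i ∨ w = b i})
    (htourn : ∀ u ∈ K, ∀ v ∈ K, IsMissing A u v →
      ∃ i < k, ({u, v} : Set V) = ({a i, b i} : Set V)) :
    (Odd k → A (a (k - 1)) (a 0) ∧ A (b (k - 1)) (b 0)) ∧
    (Even k → A (a (k - 1)) (b 0) ∧ A (b (k - 1)) (a 0)) := by
  subst hK
  have hc := completeBetweenPairs_of_missing_subset_matching hdisj htourn
  have arcs := arcs_along_chain hc hchain 0 (k - 2) (by omega)
  have hlast : 0 + (k - 2) + 1 = k - 1 := by omega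
  have heven : Even (k - 2) ↔ Even k := by simp [Nat.even_sub hk]
  have hodd : Odd (k - 2) ↔ Odd k := by simp only [← Nat.not_even_iff_odd, heven]
  rw [hlast] at arcs
  exact ⟨fun h => arcs.2 (hodd.mpr h), fun h => arcs.1 (heven.mpr h)⟩

/-- Lemma 4.16: the closing arcs of a cycle of `Δ(D)` inside a tournament missing a
matching, according to the parity of the length. (Indices `1,…,k` are represented by
`0,…,k-1`.) -/
theorem stmt14 {V : Type*} [Fintype V] (A : V → V → Prop) (hA : Oriented A)
    (k : ℕ) (hk : 2 ≤ k) (a b : ℕ → V)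
    (hm : ∀ i < k, IsMissing A (a i) (b i))
    (hdisj : ∀ i < k, ∀ j < k, i ≠ j →
      Disjoint ({a i, b i} : Set V) ({a j, b j} : Set V))
    (hchain : ∀ i, i + 1 < k → LosesOrd A (a i) (b i) (a (i + 1)) (b (i + 1)))
    (hcycle : Loses A (a (k - 1)) (b (k - 1)) (a 0) (b 0))
    (K : Set V) (hK : K = {w | ∃ i < k, w = a i ∨ w = b i})
    (htourn : ∀ u ∈ K, ∀ v ∈ K, IsMissing A u v →
      ∃ i < k, ({u, v} : Set V) = ({a i, b i} : Set V)) :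
    (Odd k → A (a (k - 1)) (a 0) ∧ A (b (k - 1)) (b 0)) ∧
    (Even k → A (a (k - 1)) (b 0) ∧ A (b (k - 1)) (a 0)) :=
  stmt14_general A k hk a b hdisj hchain K hK htourn

end SSNC
end
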